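/- For every p with 0 < p < 1/2 there exists a strictly increasing sequence α : ℕ → ℕ of positive integers such that: (i) ∑_{k=0}^{∞} 1/α_k^p < ∞; (ii) λ·∑_{η=0}^{k-1} M_{α_η}^{1/p}/α_η < M_{α_k}^{1/p}/α_k for every k ≥ 1; and (iii) 32·λ·M_{α_{k-1}}^{1/p}/α_{k-1} < M_{α_k}^{1/p-2}/α_k for every k ≥ 1. -/

import Mathlib

open MeasureTheory Complex Finset ENNReal

noncomputable section

namespace VilenkinT

variable (m : ℕ → ℕ)

/-- The generalized powers `M_0 = 1`, `M_{k+1} = m_k M_k`. -/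
def Mgen : ℕ → ℕ
  | 0 => 1
  | k + 1 => m k * Mgen k

/-- The Vilenkin group (as a measurable space of coordinate sequences). -/
abbrev G := ∀ k : ℕ, Fin (m k)

/-- The `j`-th digit of `n` in the generalized number system based on `m`. -/
def digit (n j : ℕ) : ℕ := n / Mgen m j % m j

/-- The Vilenkin system `ψ_n(x) = ∏_k exp(2πi n_k x_k / m_k)`. -/
def psi (n : ℕ) (x : G m) : ℂ :=
  ∏' k : ℕ, Complex.exp (2 * Real.pi * Complex.I * (digit m n k : ℂ) * ((x k : ℕ) : ℂ) / (m k : ℂ))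

/-- Partial sums of the Vilenkin–Fourier series built from coefficients `fhat`. -/
def partialSum (fhat : ℕ → ℂ) (n : ℕ) (x : G m) : ℂ :=
  ∑ k ∈ Finset.range n, fhat k * psi m k x

/-- `Q_n := ∑_{k=0}^{n-1} q_k`. -/
def Qsum (q : ℕ → ℝ) (n : ℕ) : ℝ := ∑ k ∈ Finset.range n, q k

/-- The `T`-means `T_n f = (1/Q_n) ∑_{k=0}^{n-1} q_k S_k f`. -/
def Tmean (q : ℕ → ℝ) (fhat : ℕ → ℂ) (n : ℕ) (x : G m) : ℂ :=
  (1 / (Qsum q n : ℂ)) * ∑ k ∈ Finset.range n, (q k : ℂ) * partialSum m fhat k x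

/-- The maximal operator `T^* f = sup_{n ≥ 1} |T_n f|` (with values in `ℝ≥0∞`). -/
def Tstar (q : ℕ → ℝ) (fhat : ℕ → ℂ) (x : G m) : ℝ≥0∞ :=
  ⨆ (n : ℕ) (_ : 1 ≤ n), ENNReal.ofReal ‖Tmean m q fhat n x‖

/-- The weak-`L_p` norm `sup_{t>0} t μ(g > t)^{1/p}` of an `ℝ≥0∞`-valued function. -/
def weakNorm (μ : Measure (G m)) (p : ℝ) (g : G m → ℝ≥0∞) : ℝ≥0∞ :=
  ⨆ (t : ℝ) (_ : 0 < t), ENNReal.ofReal t * (μ {x | ENNReal.ofReal t < g x}) ^ (1 / p)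

/-- The weak-`L_p` norm of a complex valued function. -/
def weakNormC (μ : Measure (G m)) (p : ℝ) (g : G m → ℂ) : ℝ≥0∞ :=
  weakNorm m μ p fun x => ENNReal.ofReal ‖g x‖

/-- `μ` is the product of the uniform probability measures on the coordinates:
it is a probability measure giving each cylinder of length `n` measure `1/M_n`. -/
def IsHaar (μ : Measure (G m)) : Prop :=
  IsProbabilityMeasure μ ∧
    ∀ (n : ℕ) (x : G m), μ {y | ∀ i < n, y i = x i} = ((Mgen m n : ℝ≥0∞))⁻¹

/-- The σ-algebra generated by the first `n` coordinates. -/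
def coordMS (n : ℕ) : MeasurableSpace (G m) :=
  MeasurableSpace.comap (fun x (i : Fin n) => x i) inferInstance

/-- `f = (f^{(n)})` is a martingale with respect to the filtration of coordinate σ-algebras. -/
def IsVMartingale (μ : Measure (G m)) (f : ℕ → G m → ℂ) : Prop :=
  (∀ n, Integrable (f n) μ) ∧ (∀ n, StronglyMeasurable[coordMS m n] (f n)) ∧
    ∀ n, μ[f (n + 1)|coordMS m n] =ᵐ[μ] f n

/-- `fhat` is the coefficient function of the martingale `f`. -/
def IsCoeff (μ : Measure (G m)) (f : ℕ → G m → ℂ) (fhat : ℕ → ℂ) : Prop :=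
  ∀ k i, i < Mgen m k → fhat i = ∫ x, f k x * (starRingEnd ℂ) (psi m i x) ∂μ

/-- The martingale Hardy space (quasi-)norm `‖f‖_{H_p} = (∫ (sup_n |f^{(n)}|)^p dμ)^{1/p}`. -/
def HardyNorm (μ : Measure (G m)) (p : ℝ) (f : ℕ → G m → ℂ) : ℝ≥0∞ :=
  (∫⁻ x, (⨆ n, ENNReal.ofReal ‖f n x‖) ^ p ∂μ) ^ (1 / p)

/-- The Vilenkin–Fourier coefficients of an integrable function. -/
def fourierCoeff (μ : Measure (G m)) (f : G m → ℂ) (n : ℕ) : ℂ :=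
  ∫ x, f x * (starRingEnd ℂ) (psi m n x) ∂μ

/-- The Fejér means `σ_n f = (1/n) ∑_{k=1}^n S_k f`. -/
def sigmaMean (fhat : ℕ → ℂ) (n : ℕ) (x : G m) : ℂ :=
  (1 / (n : ℂ)) * ∑ k ∈ Finset.Icc 1 n, partialSum m fhat k x

/-- The maximal Fejér operator `σ^* f = sup_{n ≥ 1} |σ_n f|`. -/
def sigmaStar (fhat : ℕ → ℂ) (x : G m) : ℝ≥0∞ :=
  ⨆ (n : ℕ) (_ : 1 ≤ n), ENNReal.ofReal ‖sigmaMean m fhat n x‖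

/-- `l_n := ∑_{k=1}^{n-1} 1/k`. -/
def lsum (n : ℕ) : ℝ := ∑ k ∈ Finset.Icc 1 (n - 1), (1 : ℝ) / k

/-- The Riesz logarithmic means `R_n f = (1/l_n) ∑_{k=1}^{n-1} S_k f / k`. -/
def Riesz (fhat : ℕ → ℂ) (n : ℕ) (x : G m) : ℂ :=
  (1 / (lsum n : ℂ)) * ∑ k ∈ Finset.Icc 1 (n - 1), partialSum m fhat k x / (k : ℂ)

/-- The maximal Riesz operator `R^* f = sup_{n ≥ 2} |R_n f|`. -/
def RieszStar (fhat : ℕ → ℂ) (x : G m) : ℝ≥0∞ :=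
  ⨆ (n : ℕ) (_ : 2 ≤ n), ENNReal.ofReal ‖Riesz m fhat n x‖

/-- The Cesàro numbers `A_n^α = ∏_{j=1}^n (α+j)/j`. -/
def Aces (α : ℝ) (n : ℕ) : ℝ := ∏ j ∈ Finset.Icc 1 n, (α + j) / j

/-- The means `U_n^α f = (1/A_n^α) ∑_{k=0}^{n-1} A_k^{α-1} S_k f`. -/
def Umean (α : ℝ) (fhat : ℕ → ℂ) (n : ℕ) (x : G m) : ℂ :=
  (1 / (Aces α n : ℂ)) * ∑ k ∈ Finset.range n, (Aces (α - 1) k : ℂ) * partialSum m fhat k x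

/-- The maximal operator `U^{α,*} f = sup_{n ≥ 1} |U_n^α f|`. -/
def Ustar (α : ℝ) (fhat : ℕ → ℂ) (x : G m) : ℝ≥0∞ :=
  ⨆ (n : ℕ) (_ : 1 ≤ n), ENNReal.ofReal ‖Umean m α fhat n x‖

/-- The weights `q_0 = 1`, `q_k = k^{α-1}` generating the means `V_n^α`. -/
def qV (α : ℝ) (k : ℕ) : ℝ := if k = 0 then 1 else (k : ℝ) ^ (α - 1)

/-- The weights `q_k = max(0, log^{(β)}(k^α))` generating the means `B_n^{α,β}`. -/
def qB (α : ℝ) (β : ℕ) (k : ℕ) : ℝ := max 0 (Real.log^[β] ((k : ℝ) ^ α))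

/-- The maximal operator `B^{α,β,*} f = sup_{n : Q_n > 0} |B_n^{α,β} f|`. -/
def Bstar (α : ℝ) (β : ℕ) (fhat : ℕ → ℂ) (x : G m) : ℝ≥0∞ :=
  ⨆ (n : ℕ) (_ : 0 < Qsum (qB α β) n), ENNReal.ofReal ‖Tmean m (qB α β) fhat n x‖

open Classical in
/-- The coefficient function `ĉ` of the counterexample martingale:
`ĉ(v) = M_{α_k}^{1/p-1}/α_k` for `M_{α_k} ≤ v < M_{α_k + 1}`, and `0` otherwise. -/
def chat (p : ℝ) (a : ℕ → ℕ) (v : ℕ) : ℝ :=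
  if h : ∃ k, Mgen m (a k) ≤ v ∧ v < Mgen m (a k + 1) then
    (Mgen m (a h.choose) : ℝ) ^ (1 / p - 1) / (a h.choose : ℝ)
  else 0


/-! Since `M_n ≥ 2^n`, the ratio `M_n^{1/p-2}/n` tends to infinity, so the sequence can be chosen
greedily: `a_{k+1} ≥ 2 a_k + 1` so large that `M_{a_{k+1}}^{1/p-2}/a_{k+1}` exceeds
`32 λ ∑_{i ≤ a_k} M_i^{1/p}/i`. That single bound dominates both the sum over the earlier `a_η` in
(ii) and the term at `a_k` in (iii), while `a_k ≥ 2^k` makes `∑ a_k^{-p}` converge. -/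

open Filter

theorem pow_le_Mgen {b : ℕ} (hm : ∀ k, b ≤ m k) (n : ℕ) : b ^ n ≤ Mgen m n := by
  induction n with
  | zero => simp [Mgen]
  | succ n ih => rw [pow_succ', Mgen]; exact Nat.mul_le_mul (hm n) ih

theorem tendsto_Mgen_rpow_div_atTop (hm : ∀ k, 2 ≤ m k) {q : ℝ} (hq : 0 < q) :
    Tendsto (fun n : ℕ => (Mgen m n : ℝ) ^ q / n) atTop atTop := by
  set L := Real.log 2 * q with hL_def
  have hL : 0 < L := mul_pos (Real.log_pos one_lt_two) hq
  have hexp : Tendsto (fun n : ℕ => Real.exp (L * n) / n) atTop atTop := by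
    refine (((Real.tendsto_exp_div_pow_atTop 1).comp
      (tendsto_natCast_atTop_atTop.const_mul_atTop hL)).const_mul_atTop hL).congr fun n => ?_
    rcases eq_or_ne (n : ℝ) 0 with hn | hn
    · simp [hn]
    · simp only [Function.comp_apply, pow_one]
      field_simp
  refine tendsto_atTop_mono (fun n => ?_) hexp
  have h2n : ((2 : ℝ) ^ n) ^ q = Real.exp (L * n) := by
    rw [Real.rpow_def_of_pos (by positivity), Real.log_pow, hL_def]; ring_nf
  rw [← h2n]
  gcongr
  exact_mod_cast pow_le_Mgen m hm n

theorem exists_two_pow_le_seq_of_eventually {R : ℕ → ℕ → Prop} (hR : ∀ n, ∀ᶠ N in atTop, R n N) :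
    ∃ a : ℕ → ℕ, StrictMono a ∧ (∀ k, 2 ^ k ≤ a k) ∧ ∀ k, R (a k) (a (k + 1)) := by
  choose next hnext using fun n => ((eventually_ge_atTop (2 * n + 1)).and (hR n)).exists
  set a : ℕ → ℕ := fun k => next^[k] 1
  have ha_succ : ∀ k, a (k + 1) = next (a k) := fun k => Function.iterate_succ_apply' next k 1
  have ha_pow : ∀ k, 2 ^ k ≤ a k := by
    intro k
    induction k with
    | zero => simp [a]
    | succ k ih => rw [ha_succ, pow_succ]; linarith [(hnext (a k)).1]
  refine ⟨a, strictMono_nat_of_lt_succ fun k => ?_, ha_pow, fun k => ha_succ k ▸ (hnext (a k)).2⟩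
  rw [ha_succ]; linarith [(hnext (a k)).1]

theorem summable_one_div_rpow_of_two_pow_le {a : ℕ → ℕ} (ha : ∀ k, 2 ^ k ≤ a k) {p : ℝ}
    (hp : 0 < p) : Summable fun k => 1 / (a k : ℝ) ^ p := by
  have h2p : 1 < (2 : ℝ) ^ p := Real.one_lt_rpow one_lt_two hp
  refine Summable.of_nonneg_of_le (fun k => by positivity) (fun k => ?_)
    (summable_geometric_of_lt_one (by positivity) (inv_lt_one_of_one_lt₀ h2p))
  calc 1 / (a k : ℝ) ^ p ≤ 1 / ((2 : ℝ) ^ k) ^ p := by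
        gcongr
        exact_mod_cast ha k
    _ = ((2 : ℝ) ^ p)⁻¹ ^ k := by
        rw [← Real.rpow_natCast, ← Real.rpow_mul zero_le_two, mul_comm, Real.rpow_mul zero_le_two,
          Real.rpow_natCast, one_div, inv_pow]

theorem sum_range_succ_comp_le_sum_range {N : Type*} [AddCommMonoid N] [Preorder N]
    [AddLeftMono N] {F : ℕ → N} (hF : ∀ n, 0 ≤ F n) {a : ℕ → ℕ} (ha : StrictMono a) (k : ℕ) :
    ∑ η ∈ range (k + 1), F (a η) ≤ ∑ n ∈ range (a k + 1), F n := by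
  classical
  rw [← sum_image ha.injective.injOn]
  refine sum_le_sum_of_subset_of_nonneg (fun n hn => ?_) fun n _ _ => hF n
  obtain ⟨η, hη, rfl⟩ := mem_image.mp hn
  exact mem_range.mpr (Nat.lt_succ_of_le (ha.monotone (Nat.lt_succ_iff.mp (mem_range.mp hη))))

theorem exists_lacunary_sequence_general
    (m : ℕ → ℕ) (hm : ∀ k, 2 ≤ m k) (Λ : ℕ)
    (p : ℝ) (hp : 0 < p) (hp2 : p < 1 / 2) :
    ∃ a : ℕ → ℕ, StrictMono a ∧ (∀ k, 1 ≤ a k) ∧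
      Summable (fun k => 1 / (a k : ℝ) ^ p) ∧
      (∀ k : ℕ, 1 ≤ k →
        (Λ : ℝ) * ∑ η ∈ Finset.range k, (Mgen m (a η) : ℝ) ^ (1 / p) / (a η : ℝ) <
          (Mgen m (a k) : ℝ) ^ (1 / p) / (a k : ℝ)) ∧
      ∀ k : ℕ, 1 ≤ k →
        32 * (Λ : ℝ) * (Mgen m (a (k - 1)) : ℝ) ^ (1 / p) / (a (k - 1) : ℝ) <
          (Mgen m (a k) : ℝ) ^ (1 / p - 2) / (a k : ℝ) := by
  have hq : 0 < 1 / p - 2 := by rw [sub_pos, lt_one_div two_pos hp]; linarith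
  set F : ℕ → ℝ := fun n => (Mgen m n : ℝ) ^ (1 / p) / n
  have hF : ∀ n, 0 ≤ F n := fun n => by positivity
  have hGF : ∀ n, (Mgen m n : ℝ) ^ (1 / p - 2) / n ≤ F n := fun n => by
    have hM : (1 : ℝ) ≤ Mgen m n := by exact_mod_cast Nat.one_le_two_pow.trans (pow_le_Mgen m hm n)
    dsimp only [F]
    gcongr
    linarith
  obtain ⟨a, ha_mono, ha_pow, ha_next⟩ := exists_two_pow_le_seq_of_eventually
    fun n => (tendsto_Mgen_rpow_div_atTop m hm hq).eventually_gt_atTop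
      (32 * Λ * ∑ i ∈ range (n + 1), F i)
  have hΛ : (0 : ℝ) ≤ Λ := Nat.cast_nonneg Λ
  refine ⟨a, ha_mono, fun k => Nat.one_le_two_pow.trans (ha_pow k),
    summable_one_div_rpow_of_two_pow_le ha_pow hp, fun k hk => ?_, fun k hk => ?_⟩ <;>
    obtain ⟨j, rfl⟩ := Nat.exists_eq_add_of_le' hk
  · have hsum := sum_range_succ_comp_le_sum_range hF ha_mono j
    have hsum_nonneg : 0 ≤ ∑ i ∈ range (a j + 1), F i := sum_nonneg fun i _ => hF i
    calc (Λ : ℝ) * ∑ η ∈ range (j + 1), F (a η) ≤ 32 * Λ * ∑ i ∈ range (a j + 1), F i := by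
          nlinarith [mul_le_mul_of_nonneg_left hsum hΛ]
      _ < _ := ha_next j
      _ ≤ F (a (j + 1)) := hGF _
  · have hterm : F (a j) ≤ ∑ i ∈ range (a j + 1), F i :=
      single_le_sum (fun i _ => hF i) (self_mem_range_succ (a j))
    calc 32 * (Λ : ℝ) * (Mgen m (a (j + 1 - 1)) : ℝ) ^ (1 / p) / (a (j + 1 - 1) : ℝ)
        = 32 * Λ * F (a j) := by simp only [Nat.add_sub_cancel, F, mul_div_assoc]
      _ ≤ 32 * Λ * ∑ i ∈ range (a j + 1), F i := by gcongr
      _ < _ := ha_next j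

/-- For `0 < p < 1/2` there is a strictly increasing sequence `a` of positive
integers with `∑ 1/a_k^p < ∞`, `λ ∑_{η<k} M_{a_η}^{1/p}/a_η < M_{a_k}^{1/p}/a_k` and
`32 λ M_{a_{k-1}}^{1/p}/a_{k-1} < M_{a_k}^{1/p-2}/a_k` for all `k ≥ 1`,
where `λ = sup_k m_k`. -/
theorem exists_lacunary_sequence
    (m : ℕ → ℕ) (hm : ∀ k, 2 ≤ m k) (Λ : ℕ) (hΛ : IsLUB (Set.range m) Λ)
    (p : ℝ) (hp : 0 < p) (hp2 : p < 1 / 2) :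
    ∃ a : ℕ → ℕ, StrictMono a ∧ (∀ k, 1 ≤ a k) ∧
      Summable (fun k => 1 / (a k : ℝ) ^ p) ∧
      (∀ k : ℕ, 1 ≤ k →
        (Λ : ℝ) * ∑ η ∈ Finset.range k, (Mgen m (a η) : ℝ) ^ (1 / p) / (a η : ℝ) <
          (Mgen m (a k) : ℝ) ^ (1 / p) / (a k : ℝ)) ∧
      ∀ k : ℕ, 1 ≤ k →
        32 * (Λ : ℝ) * (Mgen m (a (k - 1)) : ℝ) ^ (1 / p) / (a (k - 1) : ℝ) <
          (Mgen m (a k) : ℝ) ^ (1 / p - 2) / (a k : ℝ) :=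
  exists_lacunary_sequence_general m hm Λ p hp hp2

end VilenkinT
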